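/- For z > 0, define the set S(z) = { (r_1, r_2, s_1, s_2) in R^4 : z <= r_1 <= 2z, z <= s_1 <= 2z, -2z <= r_2 <= -z, -2z <= s_2 <= -z } in the reduced dual space. Then the Lebesgue volume of S(z) equals z^4, which tends to infinity as z tends to infinity, while the primal image H(S(z)) converges to the single point ((1,0,0),(1,0,0)): the supremum over points of S(z) of the l2 distance between their image under H and ((1,0,0),(1,0,0)) tends to 0 as z tends to infinity. Hence, in the reduced dual space as well, volume expansion does not imply instability in the primal space. -/

import Mathlib

/-! On `S z`, the box `[z, 2z] × [-2z, -z]` in each factor, of volume `z ^ 4`, the first entry of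
each logit vector `(r₁, r₂, 0)` exceeds the other two by at least `z`, so every softmax weight off
the first index is at most `e^{-z}` and `1 - x₀ ≤ 2 e^{-z}`. For a point `x` of the simplex,
`∑_{j ≠ 0} x_j ^ 2 ≤ (1 - x₀) ^ 2`, hence each factor of `H(S z)` lies within `√8 e^{-z}` of
`(1, 0, 0)`, and `H(S z)` within `4 e^{-z}` of `((1, 0, 0), (1, 0, 0))`. -/

open MeasureTheory Filter

noncomputable def softmax {d : ℕ} (p : Fin d → ℝ) : Fin d → ℝ :=
  fun j => Real.exp (p j) / ∑ l, Real.exp (p l)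

noncomputable def G {n m : ℕ} (pq : (Fin n → ℝ) × (Fin m → ℝ)) :
    (Fin n → ℝ) × (Fin m → ℝ) :=
  (softmax pq.1, softmax pq.2)

noncomputable def Cfun {n m : ℕ} (A B : Matrix (Fin n) (Fin m) ℝ)
    (x : Fin n → ℝ) (y : Fin m → ℝ) : ℝ :=
  -∑ j, ∑ k, x j * y k * (A j k - A.mulVec y j) * (B j k - B.transpose.mulVec x k)

noncomputable def mwuStep {n m : ℕ} (A B : Matrix (Fin n) (Fin m) ℝ) (ε : ℝ)
    (xy : (Fin n → ℝ) × (Fin m → ℝ)) : (Fin n → ℝ) × (Fin m → ℝ) :=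
  (fun j => xy.1 j * Real.exp (ε * A.mulVec xy.2 j) /
      ∑ l, xy.1 l * Real.exp (ε * A.mulVec xy.2 l),
   fun k => xy.2 k * Real.exp (ε * B.transpose.mulVec xy.1 k) /
      ∑ l, xy.2 l * Real.exp (ε * B.transpose.mulVec xy.1 l))

noncomputable def mwuDual {n m : ℕ} (A B : Matrix (Fin n) (Fin m) ℝ) (ε : ℝ)
    (pq : (Fin n → ℝ) × (Fin m → ℝ)) : (Fin n → ℝ) × (Fin m → ℝ) :=
  (fun j => pq.1 j + ε * A.mulVec (softmax pq.2) j,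
   fun k => pq.2 k + ε * B.transpose.mulVec (softmax pq.1) k)

def primalSpace (n m : ℕ) : Set ((Fin n → ℝ) × (Fin m → ℝ)) :=
  {xy | xy.1 ∈ stdSimplex ℝ (Fin n) ∧ xy.2 ∈ stdSimplex ℝ (Fin m)}

def primalInterior (n m : ℕ) : Set ((Fin n → ℝ) × (Fin m → ℝ)) :=
  {xy | ((∑ j, xy.1 j) = 1 ∧ ∀ j, 0 < xy.1 j) ∧ ((∑ k, xy.2 k) = 1 ∧ ∀ k, 0 < xy.2 k)}

noncomputable def ctriv {I J : Type*} [Fintype I] [Fintype J]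
    (M : Matrix I J ℝ) : ℝ :=
  ⨅ a : I → ℝ, ⨅ b : J → ℝ,
    ((⨆ jk : I × J, (M jk.1 jk.2 - a jk.1 - b jk.2)) -
     (⨅ jk : I × J, (M jk.1 jk.2 - a jk.1 - b jk.2)))

def extremalDomain {n m : ℕ} (δ : ℝ) : Set ((Fin n → ℝ) × (Fin m → ℝ)) :=
  {xy | xy ∈ primalSpace n m ∧ (∃! j, 1 - δ ≤ xy.1 j) ∧ (∃! k, 1 - δ ≤ xy.2 k)}

def Eset {n m : ℕ} (κ : ℝ) : Set ((Fin n → ℝ) × (Fin m → ℝ)) :=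
  {xy | xy ∈ primalSpace n m ∧
    (∃ j1 j2, j1 ≠ j2 ∧ κ < xy.1 j1 ∧ κ < xy.1 j2) ∧
    (∃ k1 k2, k1 ≠ k2 ∧ κ < xy.2 k1 ∧ κ < xy.2 k2)}

noncomputable def dist2 {n m : ℕ} (u w : (Fin n → ℝ) × (Fin m → ℝ)) : ℝ :=
  Real.sqrt ((∑ j, (u.1 j - w.1 j)^2) + (∑ k, (u.2 k - w.2 k)^2))

noncomputable def diam2 {n m : ℕ} (S : Set ((Fin n → ℝ) × (Fin m → ℝ))) : ℝ :=
  sSup {d | ∃ u ∈ S, ∃ w ∈ S, d = dist2 u w}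

noncomputable def omwuPairStep {n m : ℕ} (A B : Matrix (Fin n) (Fin m) ℝ) (ε : ℝ)
    (s : ((Fin n → ℝ) × (Fin m → ℝ)) × ((Fin n → ℝ) × (Fin m → ℝ))) :
    ((Fin n → ℝ) × (Fin m → ℝ)) × ((Fin n → ℝ) × (Fin m → ℝ)) :=
  ((fun j => s.1.1 j + ε * (2 * A.mulVec (softmax s.1.2) j - A.mulVec (softmax s.2.2) j),
    fun k => s.1.2 k + ε * (2 * B.transpose.mulVec (softmax s.1.1) k
        - B.transpose.mulVec (softmax s.2.1) k)),
   s.1)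

noncomputable def omwuIter {n m : ℕ} (A B : Matrix (Fin n) (Fin m) ℝ) (ε : ℝ)
    (t : ℕ) (pq : (Fin n → ℝ) × (Fin m → ℝ)) : (Fin n → ℝ) × (Fin m → ℝ) :=
  ((omwuPairStep A B ε)^[t] (pq, pq)).2

noncomputable def gameValue {n m : ℕ} (A : Matrix (Fin n) (Fin m) ℝ) : ℝ :=
  ⨆ x ∈ stdSimplex ℝ (Fin n), ⨅ y ∈ stdSimplex ℝ (Fin m), ∑ j, ∑ k, x j * A j k * y k

def subTrivSet {n m : ℕ} (A : Matrix (Fin n) (Fin m) ℝ) : Set ℝ :=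
  {r | ∃ j1 j2 : Fin n, ∃ k1 k2 : Fin m, j1 ≠ j2 ∧ k1 ≠ k2 ∧
    r = ctriv (A.submatrix ![j1, j2] ![k1, k2])}

def entryGapSet {n m : ℕ} (A : Matrix (Fin n) (Fin m) ℝ) : Set ℝ :=
  {r | (∃ j : Fin n, ∃ k1 k2 : Fin m, k1 ≠ k2 ∧ r = |A j k1 - A j k2|) ∨
       (∃ j1 j2 : Fin n, ∃ k : Fin m, j1 ≠ j2 ∧ r = |A j1 k - A j2 k|)}

/-- The conversion from the reduced dual space (of Eshel and Akin) to the primal space,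
for n = m = 3: H(r,s) = (x,y) with x ∝ (exp r₁, exp r₂, 1) and y ∝ (exp s₁, exp s₂, 1). -/
noncomputable def reducedConv (rs : (Fin 2 → ℝ) × (Fin 2 → ℝ)) :
    (Fin 3 → ℝ) × (Fin 3 → ℝ) :=
  (softmax ![rs.1 0, rs.1 1, 0], softmax ![rs.2 0, rs.2 1, 0])

open Finset Real

lemma sum_sq_sub_single_le_of_mem_stdSimplex {ι : Type*} [Fintype ι] [DecidableEq ι]
    {x : ι → ℝ} (hx : x ∈ stdSimplex ℝ ι) (i : ι) :
    ∑ j, (x j - (Pi.single i 1 : ι → ℝ) j) ^ 2 ≤ 2 * (1 - x i) ^ 2 := by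
  have hrest : ∑ j ∈ univ.erase i, x j = 1 - x i := by
    rw [sum_erase_eq_sub (mem_univ i), hx.2]
  have hoff : ∑ j ∈ univ.erase i, (x j - (Pi.single i 1 : ι → ℝ) j) ^ 2 =
      ∑ j ∈ univ.erase i, x j ^ 2 :=
    sum_congr rfl fun j hj => by rw [Pi.single_eq_of_ne (ne_of_mem_erase hj), sub_zero]
  have hsq := sum_sq_le_sq_sum_of_nonneg (s := univ.erase i) fun j _ => hx.1 j
  rw [← add_sum_erase _ _ (mem_univ i), hoff, Pi.single_eq_same]
  rw [hrest] at hsq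
  linarith [show (x i - 1) ^ 2 = (1 - x i) ^ 2 by ring]

section Softmax

variable {d : ℕ}

lemma softmax_pos (p : Fin d → ℝ) (j : Fin d) : 0 < softmax p j := by
  have : Nonempty (Fin d) := ⟨j⟩
  unfold softmax
  positivity

lemma sum_softmax [NeZero d] (p : Fin d → ℝ) : ∑ j, softmax p j = 1 := by
  have : 0 < ∑ l, exp (p l) := sum_pos (fun l _ => exp_pos (p l)) univ_nonempty
  simp only [softmax, ← sum_div]
  exact div_self this.ne'

lemma softmax_mem_stdSimplex [NeZero d] (p : Fin d → ℝ) : softmax p ∈ stdSimplex ℝ (Fin d) :=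
  ⟨fun j => (softmax_pos p j).le, sum_softmax p⟩

lemma softmax_le_exp_sub (p : Fin d → ℝ) (i j : Fin d) : softmax p j ≤ exp (p j - p i) := by
  rw [softmax, exp_sub]
  gcongr
  exact single_le_sum (fun l _ => (exp_pos (p l)).le) (mem_univ i)

lemma one_sub_softmax_le (p : Fin d → ℝ) (i : Fin d) {z : ℝ}
    (hgap : ∀ j ≠ i, p j + z ≤ p i) : 1 - softmax p i ≤ (d - 1) * exp (-z) := by
  have : NeZero d := ⟨i.pos.ne'⟩
  calc 1 - softmax p i = ∑ j ∈ univ.erase i, softmax p j := by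
        rw [sum_erase_eq_sub (mem_univ i), sum_softmax]
    _ ≤ ∑ j ∈ univ.erase i, exp (-z) := sum_le_sum fun j hj =>
        (softmax_le_exp_sub p i j).trans <|
          exp_le_exp.2 <| by linarith [hgap j (ne_of_mem_erase hj)]
    _ = (d - 1) * exp (-z) := by
        rw [sum_const, card_erase_of_mem (mem_univ i), card_univ, Fintype.card_fin, nsmul_eq_mul,
          Nat.cast_pred i.pos]

lemma sum_sq_softmax_sub_single_le (p : Fin d → ℝ) (i : Fin d) {z : ℝ}
    (hgap : ∀ j ≠ i, p j + z ≤ p i) :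
    ∑ j, (softmax p j - (Pi.single i 1 : Fin d → ℝ) j) ^ 2 ≤ 2 * ((d - 1) * exp (-z)) ^ 2 := by
  have : NeZero d := ⟨i.pos.ne'⟩
  have hσ := softmax_mem_stdSimplex p
  calc _ ≤ 2 * (1 - softmax p i) ^ 2 := sum_sq_sub_single_le_of_mem_stdSimplex hσ i
    _ ≤ _ := by
      gcongr 2 * ?_ ^ 2
      · exact sub_nonneg.2 (mem_Icc_of_mem_stdSimplex hσ i).2
      · exact one_sub_softmax_le p i hgap

end Softmax

def reducedBox (z : ℝ) : Set ((Fin 2 → ℝ) × (Fin 2 → ℝ)) :=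
  Set.Icc (![z, -(2 * z)], ![z, -(2 * z)]) (![2 * z, -z], ![2 * z, -z])

lemma volume_Icc_prod_pi {ι κ : Type*} [Fintype ι] [Fintype κ] (a b : (ι → ℝ) × (κ → ℝ)) :
    volume (Set.Icc a b) =
      (∏ i, ENNReal.ofReal (b.1 i - a.1 i)) * ∏ k, ENNReal.ofReal (b.2 k - a.2 k) := by
  rw [Set.Icc_prod_eq, Measure.volume_eq_prod, Measure.prod_prod, Real.volume_Icc_pi,
    Real.volume_Icc_pi]

lemma volume_reducedBox {z : ℝ} (hz : 0 ≤ z) : volume (reducedBox z) = ENNReal.ofReal (z ^ 4) := by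
  rw [reducedBox, volume_Icc_prod_pi]
  simp only [Fin.prod_univ_two, Matrix.cons_val_zero, Matrix.cons_val_one,
    show 2 * z - z = z by ring, show -z - -(2 * z) = z by ring]
  rw [ENNReal.ofReal_pow hz]
  ring

lemma add_le_vec_three_zero {a b z : ℝ} (hz : 0 ≤ z) (ha : z ≤ a) (hb : b ≤ -z) :
    ∀ j ≠ 0, ![a, b, 0] j + z ≤ ![a, b, 0] 0 := by
  intro j hj
  fin_cases j
  · exact absurd rfl hj
  all_goals simp only [Fin.mk_one, Fin.reduceFinMk, Matrix.cons_val]; linarith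

lemma dist2_reducedConv_le {z : ℝ} (hz : 0 ≤ z) {u : (Fin 2 → ℝ) × (Fin 2 → ℝ)}
    (hu : u ∈ reducedBox z) : dist2 (reducedConv u) (![1, 0, 0], ![1, 0, 0]) ≤ 4 * exp (-z) := by
  have he : ![(1 : ℝ), 0, 0] = Pi.single 0 1 := by ext j; fin_cases j <;> rfl
  have hx := sum_sq_softmax_sub_single_le _ 0 (add_le_vec_three_zero hz (hu.1.1 0) (hu.2.1 1))
  have hy := sum_sq_softmax_sub_single_le _ 0 (add_le_vec_three_zero hz (hu.1.2 0) (hu.2.2 1))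
  rw [dist2, ← sqrt_sq (by positivity : 0 ≤ 4 * exp (-z))]
  apply sqrt_le_sqrt
  simp only [reducedConv, he]
  norm_num at hx hy
  linarith [show (4 * exp (-z)) ^ 2 = 2 * (2 * exp (-z)) ^ 2 + 2 * (2 * exp (-z)) ^ 2 by ring]

/-- In the reduced dual space as well, volume expansion does not imply
primal instability. -/
theorem reduced_dual_expansion_not_primal_instability
    (S : ℝ → Set ((Fin 2 → ℝ) × (Fin 2 → ℝ)))
    (hS : ∀ z : ℝ, S z = {rs |
      z ≤ rs.1 0 ∧ rs.1 0 ≤ 2 * z ∧ z ≤ rs.2 0 ∧ rs.2 0 ≤ 2 * z ∧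
      -(2 * z) ≤ rs.1 1 ∧ rs.1 1 ≤ -z ∧ -(2 * z) ≤ rs.2 1 ∧ rs.2 1 ≤ -z}) :
    (∀ z : ℝ, 0 < z → volume (S z) = ENNReal.ofReal (z^4)) ∧
    Tendsto (fun z : ℝ => volume (S z)) atTop (nhds ⊤) ∧
    Tendsto (fun z : ℝ =>
        sSup {d : ℝ | ∃ u ∈ S z, d = dist2 (reducedConv u) (![1, 0, 0], ![1, 0, 0])})
      atTop (nhds 0) := by
  have hbox : ∀ z, S z = reducedBox z := fun z => by
    ext rs
    simp only [hS, reducedBox, Set.mem_ofPred_eq, Set.mem_Icc, Prod.le_def, Pi.le_def,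
      Fin.forall_fin_two, Matrix.cons_val_zero, Matrix.cons_val_one]
    tauto
  have hvol : ∀ z : ℝ, 0 < z → volume (S z) = ENNReal.ofReal (z ^ 4) := fun z hz => by
    rw [hbox, volume_reducedBox hz.le]
  refine ⟨hvol, ?_, ?_⟩
  · refine (ENNReal.tendsto_ofReal_atTop.comp (tendsto_pow_atTop four_ne_zero)).congr' ?_
    filter_upwards [eventually_gt_atTop 0] with z hz using (hvol z hz).symm
  · have hexp : Tendsto (fun z : ℝ => 4 * exp (-z)) atTop (nhds 0) := by
      simpa using tendsto_exp_neg_atTop_nhds_zero.const_mul 4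
    refine tendsto_of_tendsto_of_tendsto_of_le_of_le' tendsto_const_nhds hexp
      (Eventually.of_forall fun z => Real.sSup_nonneg ?_) ?_
    · rintro _ ⟨u, -, rfl⟩
      exact sqrt_nonneg _
    · filter_upwards [eventually_ge_atTop 0] with z hz
      refine Real.sSup_le ?_ (by positivity)
      rintro _ ⟨u, hu, rfl⟩
      exact dist2_reducedConv_le hz (hbox z ▸ hu)
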